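/- Let Z be a real-valued random variable with law the Gaussian measure N(m, v) on ℝ, v > 0, and let (𝒵_i)_{i ∈ I} be a countable measurable partition of ℝ such that P(Z ∈ 𝒵_i) > 0 for every i. Define p : ℝ → ℝ by p(t) := P(Z ≥ t and Z ∈ 𝒵_i) / P(Z ∈ 𝒵_i) for t ∈ 𝒵_i. Then for every α ∈ (0, 1), P(p(Z) ≤ α) = α. -/

import Mathlib

open MeasureTheory ProbabilityTheory Filter Topology Set
open scoped NNReal ENNReal

/-!
On each region `𝒵 i` the conditional tail `t ↦ P(Z ≥ t ∣ Z ∈ 𝒵 i)` is continuous, because the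
Gaussian law has no atoms, and it decreases from `1` to `0`. Hence `{p ≤ α} ∩ 𝒵 i` is a half-line
`[s, ∞) ∩ 𝒵 i` with `P(Z ≥ s ∣ Z ∈ 𝒵 i) = α`, and summing over the partition gives `α`.
-/

section TailFunction

variable {ν : Measure ℝ} [IsFiniteMeasure ν]

lemma antitone_measureReal_Ici : Antitone fun t => ν.real (Ici t) :=
  fun _ _ hst => measureReal_mono (Ici_subset_Ici.2 hst)

lemma abs_measureReal_Ici_sub_le (a t : ℝ) :
    |ν.real (Ici t) - ν.real (Ici a)| ≤ ν.real (Icc (a - |t - a|) (a + |t - a|)) := by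
  have sub_eq {s u : ℝ} (h : s ≤ u) : ν.real (Ici s) - ν.real (Ici u) = ν.real (Ico s u) := by
    rw [← Ici_sdiff_Ici, measureReal_sdiff (Ici_subset_Ici.2 h) measurableSet_Ici]
  rcases le_total t a with h | h
  · rw [abs_of_nonneg (sub_nonneg.2 (antitone_measureReal_Ici h)), sub_eq h]
    exact measureReal_mono fun x hx => ⟨by grind [abs_of_nonpos], by grind [abs_of_nonpos]⟩
  · rw [abs_sub_comm, abs_of_nonneg (sub_nonneg.2 (antitone_measureReal_Ici h)), sub_eq h]
    exact measureReal_mono fun x hx => ⟨by grind [abs_of_nonneg], by grind [abs_of_nonneg]⟩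

lemma continuous_measureReal_Ici [NullSingletonClass ν] : Continuous fun t => ν.real (Ici t) := by
  refine continuous_iff_continuousAt.2 fun a => ?_
  have hwidth : Tendsto (fun t => |t - a|) (𝓝 a) (𝓝 0) := by
    simpa using (continuous_sub_right a).abs.tendsto a
  have hIcc : Tendsto (fun t => ν.real (Icc (a - |t - a|) (a + |t - a|))) (𝓝 a) (𝓝 0) := by
    simpa [Function.comp_def, measureReal_def] using
      (ENNReal.tendsto_toReal ENNReal.zero_ne_top).comp ((tendsto_measure_Icc ν a).comp hwidth)
  exact tendsto_iff_norm_sub_tendsto_zero.2 <|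
    squeeze_zero (fun _ => norm_nonneg _) (abs_measureReal_Ici_sub_le a) hIcc

lemma tendsto_measureReal_Ici_atBot :
    Tendsto (fun t => ν.real (Ici t)) atBot (𝓝 (ν.real univ)) :=
  (ENNReal.tendsto_toReal (measure_ne_top ν univ)).comp (tendsto_measure_Ici_atBot ν)

lemma tendsto_measureReal_Ici_atTop : Tendsto (fun t => ν.real (Ici t)) atTop (𝓝 0) := by
  have h := tendsto_measure_iInter_atTop (μ := ν)
    (fun t : ℝ => measurableSet_Ici.nullMeasurableSet)
    (fun _ _ hst => Ici_subset_Ici.2 hst) ⟨0, measure_ne_top ν _⟩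
  have hempty : ⋂ t : ℝ, Ici t = ∅ :=
    eq_empty_of_forall_notMem fun x hx => (lt_add_one x).not_ge (mem_iInter.1 hx (x + 1))
  rw [hempty, measure_empty] at h
  simpa [Function.comp_def, measureReal_def] using
    (ENNReal.tendsto_toReal ENNReal.zero_ne_top).comp h

lemma measure_setOf_measureReal_Ici_le [NullSingletonClass ν] {a : ℝ} (ha₀ : 0 < a)
    (ha : a < ν.real univ) : ν {t | ν.real (Ici t) ≤ a} = ENNReal.ofReal a := by
  set S := {t | ν.real (Ici t) ≤ a}
  obtain ⟨b, hb⟩ : ∃ b, ν.real (Ici b) ≤ a :=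
    (tendsto_measureReal_Ici_atTop.eventually (ge_mem_nhds ha₀)).exists
  obtain ⟨c, hc⟩ : ∃ c, a < ν.real (Ici c) :=
    (tendsto_measureReal_Ici_atBot.eventually (lt_mem_nhds ha)).exists
  obtain ⟨d, hd⟩ : a ∈ range fun t => ν.real (Ici t) :=
    intermediate_value_univ b c continuous_measureReal_Ici ⟨hb, hc.le⟩
  have hS_bdd : BddBelow S := ⟨c, fun t ht =>
    le_of_not_gt fun htc => (hc.trans_le (antitone_measureReal_Ici htc.le)).not_ge ht⟩
  have hs : sInf S ∈ S :=
    (isClosed_le continuous_measureReal_Ici continuous_const).csInf_mem ⟨b, hb⟩ hS_bdd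
  have hS : S = Ici (sInf S) :=
    Subset.antisymm (fun t ht => csInf_le hS_bdd ht)
      (fun t ht => (antitone_measureReal_Ici ht).trans hs)
  -- `d ∈ S`, so `sInf S ≤ d` and the tail at `sInf S` is at least the tail `a` at `d`.
  have hs_eq : ν.real (Ici (sInf S)) = a :=
    hs.antisymm (hd ▸ antitone_measureReal_Ici (csInf_le hS_bdd (hd.le : d ∈ S)))
  rw [hS, ← ofReal_measureReal, hs_eq]

end TailFunction

lemma measure_eq_mul_measure_univ_of_partition {α ι : Type*} [MeasurableSpace α] [Countable ι]
    {μ : Measure α} {E : ι → Set α} (hE : ∀ i, MeasurableSet (E i))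
    (hdisj : Pairwise (Function.onFun Disjoint E)) (hcover : ⋃ i, E i = univ) {A : Set α}
    (hA : ∀ i, MeasurableSet (A ∩ E i)) {r : ℝ≥0∞} (h : ∀ i, μ (A ∩ E i) = r * μ (E i)) :
    μ A = r * μ univ := by
  have hdisjA : Pairwise (Function.onFun Disjoint fun i => A ∩ E i) :=
    fun i j hij => (hdisj hij).mono inter_subset_right inter_subset_right
  calc μ A = μ (⋃ i, A ∩ E i) := by rw [← inter_iUnion, hcover, inter_univ]
    _ = ∑' i, r * μ (E i) := by rw [measure_iUnion hdisjA hA]; exact tsum_congr h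
    _ = r * μ univ := by rw [ENNReal.tsum_mul_left, ← measure_iUnion hdisj hE, hcover]

lemma measure_inter_setOf_le_of_eq_condTail {μ : Measure ℝ} [IsFiniteMeasure μ]
    [NullSingletonClass μ] {E : Set ℝ} (hE : MeasurableSet E) (hpos : 0 < μ E) {p : ℝ → ℝ}
    (hp : ∀ t ∈ E, p t = μ.real (Ici t ∩ E) / μ.real E) {α : ℝ} (hα : α ∈ Ioo (0 : ℝ) 1) :
    MeasurableSet ({t | p t ≤ α} ∩ E) ∧ μ ({t | p t ≤ α} ∩ E) = ENNReal.ofReal α * μ E := by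
  set ν := μ.restrict E
  have hνE : ν.real univ = μ.real E := by simp [ν]
  have hE_pos : 0 < μ.real E := ENNReal.toReal_pos hpos.ne' (measure_ne_top μ E)
  have hset : {t | p t ≤ α} ∩ E = {t | ν.real (Ici t) ≤ α * ν.real univ} ∩ E := by
    ext t
    refine and_congr_left fun ht => ?_
    rw [mem_ofPred_eq, mem_ofPred_eq, hp t ht, hνE, div_le_iff₀ hE_pos,
      measureReal_restrict_apply measurableSet_Ici]
  rw [hset]
  refine ⟨(isClosed_le continuous_measureReal_Ici continuous_const).measurableSet.inter hE, ?_⟩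
  rw [← Measure.restrict_apply' hE, measure_setOf_measureReal_Ici_le, ENNReal.ofReal_mul hα.1.le,
    hνE, ofReal_measureReal]
  · exact mul_pos hα.1 (hνE ▸ hE_pos)
  · exact mul_lt_of_lt_one_left (hνE ▸ hE_pos) hα.2

/-- Marginal validity of the selective p-value for a Gaussian test statistic over a
countable measurable partition of selection regions: `P(p(Z) ≤ α) = α`. -/
theorem stmt_3 {Ω : Type*} [MeasurableSpace Ω] (P : Measure Ω) [IsProbabilityMeasure P]
    (Z : Ω → ℝ) (hZ : Measurable Z)
    (m : ℝ) (v : ℝ≥0) (hv : 0 < v)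
    (hlaw : P.map Z = gaussianReal m v)
    {I : Type*} [Countable I] (𝒵 : I → Set ℝ)
    (hmeas : ∀ i, MeasurableSet (𝒵 i))
    (hdisj : Pairwise (Function.onFun Disjoint 𝒵))
    (hcover : ⋃ i, 𝒵 i = Set.univ)
    (hpos : ∀ i, 0 < P {ω | Z ω ∈ 𝒵 i})
    (p : ℝ → ℝ)
    (hp : ∀ i, ∀ t ∈ 𝒵 i,
      p t = (P {ω | t ≤ Z ω ∧ Z ω ∈ 𝒵 i}).toReal / (P {ω | Z ω ∈ 𝒵 i}).toReal)
    (α : ℝ) (hα : α ∈ Set.Ioo (0 : ℝ) 1) :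
    P {ω | p (Z ω) ≤ α} = ENNReal.ofReal α := by
  have : NullSingletonClass (P.map Z) := hlaw ▸ nullSingletonClass_gaussianReal hv.ne'
  have hmap {s : Set ℝ} (hs : MeasurableSet s) : P (Z ⁻¹' s) = P.map Z s :=
    (Measure.map_apply hZ hs).symm
  have hpiece (i : I) := measure_inter_setOf_le_of_eq_condTail (p := p) (hmeas i)
    (hmap (hmeas i) ▸ hpos i) (fun t ht => by
      rw [hp i t ht, measureReal_def, measureReal_def, ← hmap (hmeas i),
        ← hmap (measurableSet_Ici.inter (hmeas i))]
      rfl) hα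
  calc P {ω | p (Z ω) ≤ α} = ENNReal.ofReal α * P univ :=
        measure_eq_mul_measure_univ_of_partition (E := fun i => Z ⁻¹' 𝒵 i)
          (fun i => hZ (hmeas i)) (fun i j hij => (hdisj hij).preimage Z)
          (by rw [← preimage_iUnion, hcover, preimage_univ]) (fun i => hZ (hpiece i).1)
          (fun i => by rw [hmap (hmeas i), ← (hpiece i).2]; exact hmap (hpiece i).1)
    _ = ENNReal.ofReal α := by rw [measure_univ, mul_one]
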